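/- For s > 2 and digits c_1,…,c_{n+1} ∈ {1,…,s-1}, the ratio of diameters d(Δ'_{c_1…c_{n+1}}) / d(Δ'_{c_1…c_n}) equals 1/s^{c_{n+1}}. -/

import Mathlib

/-!
Splitting off the first `n` terms of the series gives
`sVal s c = gPart s n c + s^{-(c_1+⋯+c_n)} · sVal s (c shifted by n)`, and the shifted sequence
ranges over all admissible sequences. So the rank-`n` cylinder is the image of the whole set
`Sset s` under an increasing affine map of slope `s^{-(c_1+⋯+c_n)}`, and its diameter is that
slope times the diameter of `Sset s`. The latter is positive once `s > 2`, since the constant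
sequences `1` and `2` give the distinct points `1/(s-1)` and `2/(s^2-1)`.
-/

open Finset

/-- The term of the series: `c n / s ^ (c 1 + ... + c (n+1))` (0-indexed). -/
noncomputable def sTerm (s : ℕ) (c : ℕ → ℕ) (n : ℕ) : ℝ :=
  (c n : ℝ) / (s : ℝ) ^ (∑ k ∈ Finset.range (n + 1), c k)

/-- `x = Σ_{k=1}^∞ c_k / s^{c_1+⋯+c_k}`. -/
noncomputable def sVal (s : ℕ) (c : ℕ → ℕ) : ℝ := ∑' n : ℕ, sTerm s c n

/-- The sequence `(c_k)` has all terms in `{1, ..., s-1}`. -/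
def sValid (s : ℕ) (c : ℕ → ℕ) : Prop := ∀ k, 1 ≤ c k ∧ c k ≤ s - 1

/-- The set `S_{(s,0)}`. -/
def Sset (s : ℕ) : Set ℝ := { x | ∃ c : ℕ → ℕ, sValid s c ∧ x = sVal s c }

/-- The cylinder `Δ'_{c_1 ... c_n}` of rank `n` with base the first `n` terms of `c`. -/
def cyl (s n : ℕ) (c : ℕ → ℕ) : Set ℝ :=
  { x | ∃ c' : ℕ → ℕ, sValid s c' ∧ (∀ k < n, c' k = c k) ∧ x = sVal s c' }

/-- The cylinder `Δ'_{c_1 ... c_n p}`: prefix of length `n` from `c`, next digit `p`. -/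
def cylExt (s n : ℕ) (c : ℕ → ℕ) (p : ℕ) : Set ℝ :=
  { x | ∃ c' : ℕ → ℕ, sValid s c' ∧ (∀ k < n, c' k = c k) ∧ c' n = p ∧ x = sVal s c' }

/-- `g_n = Σ_{k=1}^n c_k / s^{c_1+⋯+c_k}`. -/
noncomputable def gPart (s n : ℕ) (c : ℕ → ℕ) : ℝ := ∑ k ∈ Finset.range n, sTerm s c k

lemma sTerm_nonneg (s : ℕ) (c : ℕ → ℕ) (n : ℕ) : 0 ≤ sTerm s c n := by
  unfold sTerm; positivity

lemma sTerm_le_inv_pow {s : ℕ} (hs : 1 < s) {c : ℕ → ℕ} (hc : sValid s c) (n : ℕ) :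
    sTerm s c n ≤ (s : ℝ)⁻¹ ^ n := by
  have hs1 : (1 : ℝ) ≤ s := by exact_mod_cast hs.le
  have hexp : n + 1 ≤ ∑ k ∈ range (n + 1), c k := by
    simpa using card_nsmul_le_sum (range (n + 1)) c 1 fun k _ => (hc k).1
  have hcn : (c n : ℝ) ≤ s := by exact_mod_cast (hc n).2.trans (Nat.sub_le s 1)
  calc sTerm s c n ≤ (s : ℝ) / (s : ℝ) ^ (n + 1) :=
        div_le_div₀ (by positivity) hcn (by positivity) (pow_le_pow_right₀ hs1 hexp)
    _ = (s : ℝ)⁻¹ ^ n := by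
        rw [pow_succ, div_mul_cancel_right₀ (by positivity), inv_pow]

lemma summable_inv_pow {s : ℕ} (hs : 1 < s) : Summable fun n : ℕ => (s : ℝ)⁻¹ ^ n :=
  summable_geometric_of_lt_one (by positivity) (inv_lt_one_of_one_lt₀ (by exact_mod_cast hs))

lemma summable_sTerm {s : ℕ} (hs : 1 < s) {c : ℕ → ℕ} (hc : sValid s c) :
    Summable (sTerm s c) :=
  (summable_inv_pow hs).of_nonneg_of_le (sTerm_nonneg s c) (sTerm_le_inv_pow hs hc)

lemma sTerm_add (s : ℕ) (c : ℕ → ℕ) (n m : ℕ) :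
    sTerm s c (n + m) =
      ((s : ℝ) ^ ∑ k ∈ range n, c k)⁻¹ * sTerm s (fun j => c (n + j)) m := by
  rw [sTerm, sTerm, add_assoc, sum_range_add, pow_add]
  ring

lemma sVal_eq_gPart_add {s : ℕ} (hs : 1 < s) {c : ℕ → ℕ} (hc : sValid s c) (n : ℕ) :
    sVal s c =
      gPart s n c + ((s : ℝ) ^ ∑ k ∈ range n, c k)⁻¹ * sVal s (fun m => c (n + m)) := by
  rw [sVal, sVal, ← tsum_mul_left, gPart, ← (summable_sTerm hs hc).sum_add_tsum_nat_add n]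
  exact congrArg _ (tsum_congr fun m => by rw [add_comm m n, sTerm_add])

lemma gPart_congr (s n : ℕ) {c c' : ℕ → ℕ} (h : ∀ k < n, c' k = c k) :
    gPart s n c' = gPart s n c := by
  refine sum_congr rfl fun k hk => ?_
  have hk := mem_range.mp hk
  rw [sTerm, sTerm, h k hk, sum_congr rfl fun j hj => h j (by grind)]

lemma cyl_eq_image {s n : ℕ} (hs : 1 < s) {c : ℕ → ℕ}
    (hc : ∀ k < n, 1 ≤ c k ∧ c k ≤ s - 1) :
    cyl s n c =
      (fun x => gPart s n c + ((s : ℝ) ^ ∑ k ∈ range n, c k)⁻¹ * x) '' Sset s := by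
  ext x
  constructor
  · rintro ⟨c', hc', hagree, rfl⟩
    refine ⟨_, ⟨_, fun k => hc' (n + k), rfl⟩, ?_⟩
    rw [sVal_eq_gPart_add hs hc' n, gPart_congr s n hagree,
      sum_congr rfl fun k hk => hagree k (mem_range.mp hk)]
  · rintro ⟨_, ⟨b, hb, rfl⟩, rfl⟩
    let c' : ℕ → ℕ := fun k => if k < n then c k else b (k - n)
    have hagree : ∀ k < n, c' k = c k := fun k hk => if_pos hk
    have htail : (fun m => c' (n + m)) = b := funext fun m => by simp [c']
    have hc' : sValid s c' := fun k => by
      by_cases hk : k < n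
      · simpa [c', hk] using hc k hk
      · simpa [c', hk] using hb (k - n)
    refine ⟨c', hc', hagree, ?_⟩
    rw [sVal_eq_gPart_add hs hc' n, gPart_congr s n hagree, htail,
      sum_congr rfl fun k hk => hagree k (mem_range.mp hk)]

lemma csSup_sub_csInf_image_affine {S : Set ℝ} (hne : S.Nonempty) (hbelow : BddBelow S)
    (habove : BddAbove S) (a : ℝ) {r : ℝ} (hr : 0 ≤ r) :
    sSup ((fun x => a + r * x) '' S) - sInf ((fun x => a + r * x) '' S) =
      r * (sSup S - sInf S) := by
  have hmono : Monotone fun x => a + r * x := fun x y hxy => by dsimp; gcongr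
  have hcont : Continuous fun x => a + r * x := by fun_prop
  rw [← hmono.map_csSup_of_continuousAt hcont.continuousAt hne habove,
    ← hmono.map_csInf_of_continuousAt hcont.continuousAt hne hbelow]
  ring

lemma sValid_const {s d : ℕ} (h1 : 1 ≤ d) (h2 : d ≤ s - 1) : sValid s fun _ => d :=
  fun _ => ⟨h1, h2⟩

lemma sVal_const {s d : ℕ} (h1 : 1 ≤ d) (h2 : d ≤ s - 1) :
    sVal s (fun _ => d) = d / ((s : ℝ) ^ d - 1) := by
  have hs : 1 < s := by omega
  have hsd : (1 : ℝ) < (s : ℝ) ^ d := one_lt_pow₀ (by exact_mod_cast hs) (by omega)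
  -- a constant sequence is its own shift, so `x = d / s^d + x / s^d`
  have hsplit := sVal_eq_gPart_add hs (sValid_const h1 h2) 1
  simp only [gPart, sTerm, zero_add, sum_range_one] at hsplit
  rw [eq_div_iff (by linarith)]
  field_simp at hsplit
  linarith

lemma sVal_mem_Sset {s : ℕ} {c : ℕ → ℕ} (hc : sValid s c) : sVal s c ∈ Sset s :=
  ⟨c, hc, rfl⟩

lemma Sset_bddBelow (s : ℕ) : BddBelow (Sset s) :=
  ⟨0, by rintro x ⟨c, _, rfl⟩; exact tsum_nonneg (sTerm_nonneg s c)⟩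

lemma Sset_bddAbove {s : ℕ} (hs : 1 < s) : BddAbove (Sset s) :=
  ⟨∑' n : ℕ, (s : ℝ)⁻¹ ^ n, by
    rintro x ⟨c, hc, rfl⟩
    exact (summable_sTerm hs hc).tsum_le_tsum (sTerm_le_inv_pow hs hc) (summable_inv_pow hs)⟩

lemma csInf_Sset_lt_csSup {s : ℕ} (hs : 2 < s) : sInf (Sset s) < sSup (Sset s) := by
  have hs3 : (3 : ℝ) ≤ s := by exact_mod_cast hs
  have hlt : sVal s (fun _ => 2) < sVal s (fun _ => 1) := by
    rw [sVal_const (by norm_num) (by omega), sVal_const le_rfl (by omega),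
      div_lt_div_iff₀ (by nlinarith) (by linarith)]
    push_cast
    nlinarith
  calc sInf (Sset s) ≤ sVal s (fun _ => 2) :=
        csInf_le (Sset_bddBelow s) (sVal_mem_Sset (sValid_const (by norm_num) (by omega)))
    _ < sVal s (fun _ => 1) := hlt
    _ ≤ sSup (Sset s) :=
        le_csSup (Sset_bddAbove (by omega)) (sVal_mem_Sset (sValid_const le_rfl (by omega)))

lemma cyl_diam {s n : ℕ} (hs : 1 < s) {c : ℕ → ℕ}
    (hc : ∀ k < n, 1 ≤ c k ∧ c k ≤ s - 1) :
    sSup (cyl s n c) - sInf (cyl s n c) =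
      ((s : ℝ) ^ ∑ k ∈ range n, c k)⁻¹ * (sSup (Sset s) - sInf (Sset s)) := by
  rw [cyl_eq_image hs hc]
  exact csSup_sub_csInf_image_affine ⟨_, sVal_mem_Sset (sValid_const le_rfl (by omega))⟩
    (Sset_bddBelow s) (Sset_bddAbove hs) _ (by positivity)

theorem stmt6 (s n : ℕ) (hs : 2 < s) (c : ℕ → ℕ)
    (hc : ∀ k < n + 1, 1 ≤ c k ∧ c k ≤ s - 1) :
    (sSup (cyl s (n + 1) c) - sInf (cyl s (n + 1) c)) /
        (sSup (cyl s n c) - sInf (cyl s n c)) = 1 / (s : ℝ) ^ (c n) := by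
  have hdiam : 0 < sSup (Sset s) - sInf (Sset s) := sub_pos.mpr (csInf_Sset_lt_csSup hs)
  have hs1 : 1 < s := by omega
  rw [cyl_diam hs1 hc, cyl_diam hs1 fun k hk => hc k (by omega), sum_range_succ, pow_add]
  field_simp
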